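/- Let s = s₁ + i s₂ with s₁ > 0, c > 0, and ξ ∈ ℝ². Let β be the complex square root of s²/c² + |ξ|² with Re β > 0, and write β = a + i b. Then a·s₁ + b·s₂ ≥ 0. -/

import Mathlib

/-! Comparing imaginary parts in `β² = s²/c² + |ξ|²` gives `a b = s₁ s₂ / c²`, hence
`a (a s₁ + b s₂) = s₁ (a² + s₂² / c²) ≥ 0`, and `a > 0`. -/

namespace Complex

theorem re_mul_re_add_im_mul_im_nonneg_of_im_sq_eq {β z : ℂ} {κ : ℝ} (hβ : 0 < β.re)
    (hz : 0 ≤ z.re) (hκ : 0 ≤ κ) (h : (β ^ 2).im = κ * (z ^ 2).im) :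
    0 ≤ β.re * z.re + β.im * z.im := by
  have hmul : β.re * β.im = κ * (z.re * z.im) := by
    simp only [sq, mul_im] at h
    linarith
  have key : β.re * (β.re * z.re + β.im * z.im) = z.re * (β.re ^ 2 + κ * z.im ^ 2) := by
    linear_combination z.im * hmul
  have hprod : 0 ≤ β.re * (β.re * z.re + β.im * z.im) := key ▸ by positivity
  exact nonneg_of_mul_nonneg_right hprod hβ

end Complex

theorem stmt_0_general (s : ℂ) (s₁ s₂ : ℝ) (hs : s = ⟨s₁, s₂⟩) (hs₁ : 0 < s₁)
    (c : ℝ) (ξ : EuclideanSpace ℝ (Fin 2)) (β : ℂ)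
    (hβ : β ^ 2 = s ^ 2 / (c : ℂ) ^ 2 + (‖ξ‖ ^ 2 : ℝ))
    (hre : 0 < β.re) :
    0 ≤ β.re * s₁ + β.im * s₂ := by
  subst hs
  have him : (β ^ 2).im = (c ^ 2)⁻¹ * ((⟨s₁, s₂⟩ : ℂ) ^ 2).im := by
    rw [hβ, Complex.add_im, Complex.ofReal_im, add_zero, ← Complex.ofReal_pow,
      Complex.div_ofReal_im, div_eq_inv_mul]
  exact Complex.re_mul_re_add_im_mul_im_nonneg_of_im_sq_eq hre hs₁.le (by positivity) him

/-- If `β² = s²/c² + ‖ξ‖²` with `Re β > 0` and `Re s > 0`, `c > 0`,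
then `a·s₁ + b·s₂ ≥ 0` where `β = a + ib`, `s = s₁ + i s₂`. -/
theorem stmt_0 (s : ℂ) (s₁ s₂ : ℝ) (hs : s = ⟨s₁, s₂⟩) (hs₁ : 0 < s₁)
    (c : ℝ) (hc : 0 < c) (ξ : EuclideanSpace ℝ (Fin 2)) (β : ℂ)
    (hβ : β ^ 2 = s ^ 2 / (c : ℂ) ^ 2 + (‖ξ‖ ^ 2 : ℝ))
    (hre : 0 < β.re) :
    0 ≤ β.re * s₁ + β.im * s₂ :=
  stmt_0_general s s₁ s₂ hs hs₁ c ξ β hβ hre
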